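/- arXiv:2601.07281 — 3 statements merged into one kernel-verified Lean document; each statement's English description precedes it below -/
import Mathlib

section
/- Let X be uniformly distributed on the interval (a, b] and let g*(x) = α + βx. For a split point s ∈ (a, b], define CS(s) = P_L² P_R² (E[g*(X) | X ≤ s] − E[g*(X) | X > s])² where P_L = (s−a)/(b−a) and P_R = (b−s)/(b−a). Then CS(s) is maximized at s = (a+b)/2, with maximum value β²(b−a)²/64. -/
/-!
The mean of `α + β x` over an interval is its value at the midpoint, so the difference of the
two conditional means is `β (a - b) / 2` whatever the split point. The criterion is therefore
`β² (b - a)² / 4` times `(P_L P_R)²`, and `P_L P_R ≤ 1/4` with equality exactly at the midpoint.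
-/

open intervalIntegral

/-- `CS(s)`: under the uniform law, `E[g | X ≤ s] = (s - a)⁻¹ ∫_a^s g`; at `s = b` the junk value
`0⁻¹ = 0` is harmless because `P_R = 0` there. -/
noncomputable def splitCriterion (a b α β s : ℝ) : ℝ :=
  ((s - a) / (b - a)) ^ 2 * ((b - s) / (b - a)) ^ 2 *
    ((s - a)⁻¹ * (∫ x in a..s, (α + β * x)) - (b - s)⁻¹ * (∫ x in s..b, (α + β * x))) ^ 2

theorem integral_affine (α β u v : ℝ) :
    ∫ x in u..v, (α + β * x) = (v - u) * (α + β * ((u + v) / 2)) := by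
  rw [integral_add intervalIntegrable_const (intervalIntegrable_id.const_mul β),
    integral_const, integral_const_mul, integral_id, smul_eq_mul]
  ring

theorem inv_mul_integral_affine {u v : ℝ} (huv : u ≠ v) (α β : ℝ) :
    (v - u)⁻¹ * ∫ x in u..v, (α + β * x) = α + β * ((u + v) / 2) := by
  rw [integral_affine, inv_mul_cancel_left₀ (sub_ne_zero.mpr huv.symm)]

theorem splitCriterion_eq {a b : ℝ} (hab : a ≠ b) (α β s : ℝ) :
    splitCriterion a b α β s = ((s - a) * (b - s)) ^ 2 * β ^ 2 / (4 * (b - a) ^ 2) := by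
  have hba : b - a ≠ 0 := sub_ne_zero.mpr hab.symm
  by_cases has : a = s
  · subst has; simp [splitCriterion]
  by_cases hsb : s = b
  · subst hsb; simp [splitCriterion]
  rw [splitCriterion, inv_mul_integral_affine has, inv_mul_integral_affine hsb]
  field_simp
  ring

theorem splitCriterion_midpoint {a b : ℝ} (hab : a ≠ b) (α β : ℝ) :
    splitCriterion a b α β ((a + b) / 2) = β ^ 2 * (b - a) ^ 2 / 64 := by
  rw [splitCriterion_eq hab]
  field_simp [sub_ne_zero.mpr hab.symm]
  ring

theorem splitCriterion_le_midpoint {a b : ℝ} (hab : a ≠ b) (α β : ℝ) {s : ℝ}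
    (hs : s ∈ Set.Icc a b) :
    splitCriterion a b α β s ≤ splitCriterion a b α β ((a + b) / 2) := by
  have hprod_nonneg : 0 ≤ (s - a) * (b - s) := mul_nonneg (by linarith [hs.1]) (by linarith [hs.2])
  have hprod_le : (s - a) * (b - s) ≤ ((a + b) / 2 - a) * (b - (a + b) / 2) := by
    nlinarith [sq_nonneg (a + b - 2 * s)]
  rw [splitCriterion_eq hab, splitCriterion_eq hab]
  gcongr

/-- for `X ~ Unif(a,b]` and `g*(x) = α + βx`, the covariance-squared
splitting criterion is maximized at the midpoint, with value `β²(b−a)²/64`. -/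
theorem CS_linear_maximized_at_midpoint (a b α β : ℝ) (hab : a < b) :
    (∀ s ∈ Set.Ioc a b,
      (((s - a) / (b - a)) ^ 2 * ((b - s) / (b - a)) ^ 2 *
        ((s - a)⁻¹ * (∫ x in a..s, (α + β * x))
          - (b - s)⁻¹ * (∫ x in s..b, (α + β * x))) ^ 2)
      ≤ ((((a + b) / 2 - a) / (b - a)) ^ 2 * ((b - (a + b) / 2) / (b - a)) ^ 2 *
        (((a + b) / 2 - a)⁻¹ * (∫ x in a..((a + b) / 2), (α + β * x))
          - (b - (a + b) / 2)⁻¹ * (∫ x in ((a + b) / 2)..b, (α + β * x))) ^ 2))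
    ∧ ((((a + b) / 2 - a) / (b - a)) ^ 2 * ((b - (a + b) / 2) / (b - a)) ^ 2 *
        (((a + b) / 2 - a)⁻¹ * (∫ x in a..((a + b) / 2), (α + β * x))
          - (b - (a + b) / 2)⁻¹ * (∫ x in ((a + b) / 2)..b, (α + β * x))) ^ 2)
      = β ^ 2 * (b - a) ^ 2 / 64 :=
  ⟨fun _ hs => splitCriterion_le_midpoint hab.ne α β (Set.Ioc_subset_Icc_self hs),
    splitCriterion_midpoint hab.ne α β⟩
end

section
/- Suppose a nonnegative real sequence (E_K)_{K≥0} satisfies E_K ≤ E_{K−1}(1 − E_{K−1}/V) for all K ≥ 1, where V > 0, and E_0 ≤ V. Then E_K ≤ V/(K+3) for all K ≥ 1. -/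
/-!
Write `f x = x (1 - x / V)`. Completing the square gives `f x ≤ V / 4` for every real `x`, which
is the case `K = 1`. The parabola `f` is increasing up to its vertex `V / 2`, so `E_K ≤ V / (K + 3)`
gives `E_{K+1} ≤ f (V / (K + 3)) = V (K + 2) / (K + 3)² ≤ V / (K + 4)`, the last step being
`(K + 2)(K + 4) ≤ (K + 3)²`.
-/

section Parabola

variable {V : ℝ} (hV : 0 < V)
include hV

theorem mul_one_sub_div_le_quarter (x : ℝ) : x * (1 - x / V) ≤ V / 4 := by
  have hsq : x * (1 - x / V) = V / 4 - (2 * x - V) ^ 2 / (4 * V) := by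
    field_simp
    ring
  rw [hsq]
  have : 0 ≤ (2 * x - V) ^ 2 / (4 * V) := by positivity
  linarith

theorem mul_one_sub_div_le_of_le {x a : ℝ} (hxa : x ≤ a) (ha : 2 * a ≤ V) :
    x * (1 - x / V) ≤ a * (1 - a / V) := by
  have hdiff : a * (1 - a / V) - x * (1 - x / V) = (a - x) * (V - (a + x)) / V := by
    field_simp
    ring
  have : 0 ≤ (a - x) * (V - (a + x)) / V :=
    div_nonneg (mul_nonneg (by linarith) (by linarith)) hV.le
  linarith

theorem div_mul_one_sub_div_div_le {t : ℝ} (ht : 0 < t) :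
    V / t * (1 - V / t / V) ≤ V / (t + 1) := by
  rw [div_div_cancel_left' hV.ne', div_mul_eq_mul_div, div_le_div_iff₀ ht (by linarith)]
  have hsq : V * (1 - t⁻¹) * (t + 1) = V * t - V / t := by
    field_simp
    ring
  rw [hsq]
  have : 0 ≤ V / t := by positivity
  linarith

end Parabola

theorem recursion_rate_bound_general (V : ℝ) (hV : 0 < V) (E : ℕ → ℝ)
    (hrec : ∀ K, 1 ≤ K → E K ≤ E (K - 1) * (1 - E (K - 1) / V)) :
    ∀ K, 1 ≤ K → E K ≤ V / ((K : ℝ) + 3) := by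
  intro K hK
  induction K, hK using Nat.le_induction with
  | base =>
    calc E 1 ≤ E 0 * (1 - E 0 / V) := hrec 1 le_rfl
      _ ≤ V / 4 := mul_one_sub_div_le_quarter hV _
      _ = V / ((1 : ℕ) + 3) := by norm_num
  | succ n hn ih =>
    have ht : (4 : ℝ) ≤ n + 3 := by
      have : (1 : ℝ) ≤ n := by exact_mod_cast hn
      linarith
    have hvertex : 2 * (V / (n + 3)) ≤ V := by
      rw [← mul_div_assoc, div_le_iff₀ (by linarith)]
      nlinarith
    calc E (n + 1) ≤ E n * (1 - E n / V) := hrec (n + 1) (by omega)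
      _ ≤ V / (n + 3) * (1 - V / (n + 3) / V) := mul_one_sub_div_le_of_le hV ih hvertex
      _ ≤ V / (n + 3 + 1) := div_mul_one_sub_div_div_le hV (by linarith)
      _ = V / ((n + 1 : ℕ) + 3) := by push_cast; ring

/-- a nonnegative sequence with `E_K ≤ E_{K−1}(1 − E_{K−1}/V)` and
`E_0 ≤ V` satisfies `E_K ≤ V/(K+3)` for all `K ≥ 1`. -/
theorem recursion_rate_bound (V : ℝ) (hV : 0 < V) (E : ℕ → ℝ)
    (hnonneg : ∀ K, 0 ≤ E K)
    (hrec : ∀ K, 1 ≤ K → E K ≤ E (K - 1) * (1 - E (K - 1) / V))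
    (h0 : E 0 ≤ V) :
    ∀ K, 1 ≤ K → E K ≤ V / ((K : ℝ) + 3) :=
  recursion_rate_bound_general V hV E hrec
end

section
/- Let (E_K)_{K≥0} be a nonincreasing real sequence with the property that whenever E_{K−1} ≥ 0, E_K ≤ E_{K−1} − E_{K−1}²/V for some fixed V > 0. Then for every K ≥ 1, E_K ≤ V/(K+3). -/
/-!
The map `x ↦ x - x² / V` is bounded by `V / 4` and maps `[0, V / c]` below `V / (c + 1)`
for `c ≥ 1`, so from `E₁ ≤ V / 4` each step of the recursion improves `V / (K + 3)` to
`V / (K + 4)`. A negative term needs no recursion: by monotonicity all later terms are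
negative, hence below the positive bound.
-/

theorem sub_sq_div_le_quarter {V : ℝ} (hV : 0 < V) (x : ℝ) : x - x ^ 2 / V ≤ V / 4 := by
  have h : x - x ^ 2 / V = V / 4 - (x - V / 2) ^ 2 / V := by field_simp; ring
  rw [h]
  linarith [div_nonneg (sq_nonneg (x - V / 2)) hV.le]

theorem sub_sq_div_le_div_add_one {V c x : ℝ} (hV : 0 < V) (hc : 1 ≤ c) (hx0 : 0 ≤ x)
    (hx : x ≤ V / c) : x - x ^ 2 / V ≤ V / (c + 1) := by
  -- with `t = x / V`: `1 - (c + 1) t (1 - t) = (1 - c t) (1 - t) + t²`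
  rw [le_div_iff₀ (by linarith)] at hx
  have hxV : x ≤ V := by nlinarith
  rw [sub_div' hV.ne', div_le_div_iff₀ hV (by linarith)]
  nlinarith [mul_nonneg (sub_nonneg.2 hx) (sub_nonneg.2 hxV), sq_nonneg x]

/-- a nonincreasing sequence satisfying the quadratic decrement
whenever the previous term is nonnegative obeys `E_K ≤ V/(K+3)` for `K ≥ 1`. -/
theorem recursion_rate_bound_monotone (V : ℝ) (hV : 0 < V) (E : ℕ → ℝ)
    (hmono : Antitone E)
    (hrec : ∀ K, 1 ≤ K → 0 ≤ E (K - 1) → E K ≤ E (K - 1) - (E (K - 1)) ^ 2 / V) :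
    ∀ K, 1 ≤ K → E K ≤ V / ((K : ℝ) + 3) := by
  have step (K : ℕ) (b : ℝ) (hb : 0 ≤ b) (hbound : 0 ≤ E K → E K - E K ^ 2 / V ≤ b) :
      E (K + 1) ≤ b := by
    have hrecK := hrec (K + 1) (by omega)
    rw [Nat.add_sub_cancel] at hrecK
    by_cases hK : 0 ≤ E K
    · exact (hrecK hK).trans (hbound hK)
    · linarith [hmono K.le_succ]
  intro K hK
  induction K, hK using Nat.le_induction with
  | base =>
    convert step 0 (V / 4) (by positivity) fun _ => sub_sq_div_le_quarter hV _ using 2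
    norm_num
  | succ k _ ih =>
    rw [Nat.cast_succ, add_right_comm]
    exact step k _ (by positivity) fun h0 =>
      sub_sq_div_le_div_add_one hV (by linarith [k.cast_nonneg (α := ℝ)]) h0 ih
end
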